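/- Let A ⊆ {1,…,p} with |A| + 1 ≤ 6s* and let k ∉ A. Set z_k = (I − Φ_A)X_k. Then z_k ≠ 0, the difference Φ_{A∪{k}} − Φ_A equals the orthogonal projection ‖z_k‖^{−2} z_k z_kᵀ onto the line spanned by z_k, and for every w ∈ ℝ^n, ‖Φ_{A∪{k}} w‖² − ‖Φ_A w‖² ≤ ⟨(I − Φ_A)X_k, w⟩² / (nν). -/

import Mathlib

/-!
Write `V` for the span of the columns in `A` and `z = X_k - Φ_A X_k`. Adjoining `X_k` to `V` is
the same as adjoining `z`, and `z ⟂ V`, so `Φ_{A∪{k}}` is `Φ_A` plus the projection onto the line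
`ℝ z`. Hence `‖Φ_{A∪{k}} w‖² - ‖Φ_A w‖² = ⟨z, w⟩² / ‖z‖²`, and since `z = X_k - ∑_{j∈A} c_j X_j`,
the restricted eigenvalue condition on `A ∪ {k}` gives `‖z‖² ≥ nν`.
-/

open scoped BigOperators
open Finset

noncomputable section

/-- Span of the columns `X j`, `j ∈ S`. -/
def colSpan {n p : ℕ} (X : Fin p → EuclideanSpace ℝ (Fin n)) (S : Finset (Fin p)) :
    Submodule ℝ (EuclideanSpace ℝ (Fin n)) :=
  Submodule.span ℝ (X '' ↑S)

/-- `Φ_S`, the orthogonal projection of ℝ^n onto the span of the columns in `S`. -/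
noncomputable def proj {n p : ℕ} (X : Fin p → EuclideanSpace ℝ (Fin n)) (S : Finset (Fin p)) :
    EuclideanSpace ℝ (Fin n) →ₗ[ℝ] EuclideanSpace ℝ (Fin n) :=
  (colSpan X S).subtype ∘ₗ (colSpan X S).orthogonalProjection.toLinearMap

/-- Restricted eigenvalue condition: `‖X_S w‖² ≥ n ν ‖w‖²` for all `S` with `|S| ≤ m`. -/
def RECond {n p : ℕ} (X : Fin p → EuclideanSpace ℝ (Fin n)) (ν : ℝ) (m : ℕ) : Prop :=
  ∀ S : Finset (Fin p), S.card ≤ m → ∀ w : Fin p → ℝ,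
    (n : ℝ) * ν * ∑ j ∈ S, w j ^ 2 ≤ ‖∑ j ∈ S, w j • X j‖ ^ 2

end

namespace Submodule

variable {𝕜 E : Type*} [RCLike 𝕜] [NormedAddCommGroup E] [InnerProductSpace 𝕜 E]

theorem IsOrtho.starProjection_sup {U V : Submodule 𝕜 E} [U.HasOrthogonalProjection]
    [V.HasOrthogonalProjection] [(U ⊔ V).HasOrthogonalProjection] (h : U ⟂ V) (w : E) :
    (U ⊔ V).starProjection w = U.starProjection w + V.starProjection w := by
  refine eq_starProjection_of_mem_of_inner_eq_zero
    (add_mem (mem_sup_left (U.starProjection_apply_mem w))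
      (mem_sup_right (V.starProjection_apply_mem w))) fun x hx => ?_
  obtain ⟨u, hu, v, hv, rfl⟩ := mem_sup.1 hx
  have hUv : inner 𝕜 (U.starProjection w) v = 0 := h.inner_eq (U.starProjection_apply_mem w) hv
  have hVu : inner 𝕜 (V.starProjection w) u = 0 :=
    h.symm.inner_eq (V.starProjection_apply_mem w) hu
  have hU := U.starProjection_inner_eq_zero w u hu
  have hV := V.starProjection_inner_eq_zero w v hv
  simp only [inner_sub_left, inner_add_left, inner_add_right] at hU hV ⊢
  linear_combination hU + hV - hUv - hVu

theorem sup_span_singleton_sub_starProjection (K : Submodule 𝕜 E) [K.HasOrthogonalProjection]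
    (x : E) : K ⊔ 𝕜 ∙ (x - K.starProjection x) = K ⊔ 𝕜 ∙ x := by
  have hK : K.starProjection x ∈ K := K.starProjection_apply_mem x
  apply le_antisymm <;> refine sup_le le_sup_left ((span_singleton_le_iff_mem _ _).2 ?_)
  · exact sub_mem (mem_sup_right (mem_span_singleton_self x)) (mem_sup_left hK)
  · simpa using add_mem (mem_sup_right (mem_span_singleton_self (x - K.starProjection x)))
      (mem_sup_left hK)

theorem norm_starProjection_span_singleton_sq {F : Type*} [NormedAddCommGroup F]
    [InnerProductSpace ℝ F] (v w : F) :
    ‖(ℝ ∙ v).starProjection w‖ ^ 2 = inner ℝ v w ^ 2 / ‖v‖ ^ 2 := by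
  rcases eq_or_ne v 0 with rfl | hv
  · simp
  rw [starProjection_singleton, RCLike.ofReal_real_eq_id, id, norm_smul, mul_pow,
    Real.norm_eq_abs, sq_abs]
  field_simp [norm_ne_zero_iff.2 hv]

end Submodule

variable {n p : ℕ} {X : Fin p → EuclideanSpace ℝ (Fin n)}

theorem proj_apply (S : Finset (Fin p)) (w : EuclideanSpace ℝ (Fin n)) :
    proj X S w = (colSpan X S).starProjection w :=
  rfl

theorem colSpan_insert (S : Finset (Fin p)) (k : Fin p) :
    colSpan X (insert k S) = colSpan X S ⊔ ℝ ∙ X k := by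
  rw [colSpan, coe_insert, Set.image_insert_eq, Submodule.span_insert, sup_comm, colSpan]

theorem RECond.le_norm_sub_sq {ν : ℝ} {m : ℕ} (hRE : RECond X ν m) (hν : 0 ≤ ν)
    {A : Finset (Fin p)} (hcard : A.card + 1 ≤ m) {k : Fin p} (hk : k ∉ A)
    {v : EuclideanSpace ℝ (Fin n)} (hv : v ∈ colSpan X A) :
    n * ν ≤ ‖X k - v‖ ^ 2 := by
  obtain ⟨c, rfl⟩ := Submodule.mem_span_image_finset_iff_exists_fun' ℝ |>.1 hv
  set a : Fin p → ℝ := fun j => if j = k then 1 else -c j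
  have hsum : ∑ j ∈ insert k A, a j • X j = X k - ∑ j ∈ A, c j • X j := by
    rw [sum_insert hk, sub_eq_add_neg, ← sum_neg_distrib]
    congr 1
    · simp [a]
    · exact sum_congr rfl fun j hj => by simp [a, ne_of_mem_of_not_mem hj hk]
  have hone : 1 ≤ ∑ j ∈ insert k A, a j ^ 2 := by
    simpa [a] using single_le_sum (f := fun j => a j ^ 2) (fun _ _ => sq_nonneg _)
      (mem_insert_self k A)
  calc (n : ℝ) * ν ≤ n * ν * ∑ j ∈ insert k A, a j ^ 2 :=
        le_mul_of_one_le_right (by positivity) hone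
    _ ≤ ‖X k - ∑ j ∈ A, c j • X j‖ ^ 2 := by
      rw [← hsum]
      exact hRE _ (by rwa [card_insert_of_notMem hk]) a

theorem stmt2_general {n p s : ℕ} (hn : 0 < n)
    (X : Fin p → EuclideanSpace ℝ (Fin n))
    {ν : ℝ} (hν : 0 < ν) (hRE : RECond X ν (6 * s))
    (A : Finset (Fin p)) (hcard : A.card + 1 ≤ 6 * s)
    (k : Fin p) (hk : k ∉ A)
    (z : EuclideanSpace ℝ (Fin n)) (hz : z = X k - proj X A (X k)) :
    z ≠ 0 ∧
    (∀ w : EuclideanSpace ℝ (Fin n),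
      proj X (insert k A) w - proj X A w = ((inner ℝ z w : ℝ) / ‖z‖ ^ 2) • z) ∧
    (∀ w : EuclideanSpace ℝ (Fin n),
      ‖proj X (insert k A) w‖ ^ 2 - ‖proj X A w‖ ^ 2 ≤
        (inner ℝ z w : ℝ) ^ 2 / ((n : ℝ) * ν)) := by
  have hnν : 0 < (n : ℝ) * ν := by positivity
  rw [proj_apply] at hz
  have hzV : z ∈ (colSpan X A)ᗮ := hz ▸ (colSpan X A).sub_starProjection_mem_orthogonal (X k)
  have hzsq : n * ν ≤ ‖z‖ ^ 2 :=
    hz ▸ hRE.le_norm_sub_sq hν.le hcard hk ((colSpan X A).starProjection_apply_mem (X k))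
  have hzne : z ≠ 0 := by
    rintro rfl
    exact hnν.not_ge (by simpa using hzsq)
  have hVz : colSpan X A ⟂ ℝ ∙ z := (colSpan X A).isOrtho_orthogonal_right.mono_right
    ((Submodule.span_singleton_le_iff_mem _ _).2 hzV)
  have hproj (w) : proj X (insert k A) w = proj X A w + (ℝ ∙ z).starProjection w := by
    rw [proj_apply, proj_apply, colSpan_insert,
      ← (colSpan X A).sup_span_singleton_sub_starProjection, ← hz, hVz.starProjection_sup]
  refine ⟨hzne, fun w => ?_, fun w => ?_⟩
  · rw [hproj, add_sub_cancel_left, Submodule.starProjection_singleton, RCLike.ofReal_real_eq_id,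
      id]
  · rw [hproj, proj_apply, norm_add_sq_real,
      hVz.inner_eq ((colSpan X A).starProjection_apply_mem w) ((ℝ ∙ z).starProjection_apply_mem w),
      mul_zero, add_zero, add_sub_cancel_left, Submodule.norm_starProjection_span_singleton_sq]
    exact div_le_div_of_nonneg_left (sq_nonneg _) hnν hzsq

/-- one-step projection difference. With z_k = (I − Φ_A) X_k ≠ 0,
Φ_{A∪{k}} − Φ_A is the rank-one orthogonal projection onto span z_k, and
‖Φ_{A∪{k}} w‖² − ‖Φ_A w‖² ≤ ⟨(I − Φ_A)X_k, w⟩²/(nν). -/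
theorem stmt2 {n p s : ℕ} (hn : 0 < n) (hp : 0 < p) (hs : 0 < s)
    (X : Fin p → EuclideanSpace ℝ (Fin n))
    (hX : ∀ j, ‖X j‖ = Real.sqrt n)
    {ν : ℝ} (hν : 0 < ν) (hRE : RECond X ν (6 * s))
    (A : Finset (Fin p)) (hcard : A.card + 1 ≤ 6 * s)
    (k : Fin p) (hk : k ∉ A)
    (z : EuclideanSpace ℝ (Fin n)) (hz : z = X k - proj X A (X k)) :
    z ≠ 0 ∧
    (∀ w : EuclideanSpace ℝ (Fin n),
      proj X (insert k A) w - proj X A w = ((inner ℝ z w : ℝ) / ‖z‖ ^ 2) • z) ∧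
    (∀ w : EuclideanSpace ℝ (Fin n),
      ‖proj X (insert k A) w‖ ^ 2 - ‖proj X A w‖ ^ 2 ≤
        (inner ℝ z w : ℝ) ^ 2 / ((n : ℝ) * ν)) :=
  stmt2_general hn X hν hRE A hcard k hk z hz
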